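/- Let A : [0,1]² → ℝ be Hölder continuous and β > 0. Let λ_β > 0 and strictly positive continuous functions ψ_β, ψ̄_β on [0,1] satisfy ∫₀¹ e^{βA(x,y)} ψ_β(x) dx = λ_β ψ_β(y) and ∫₀¹ e^{βA(x,y)} ψ̄_β(y) dy = λ_β ψ̄_β(x) for all x, y. Set π_β = ∫₀¹ ψ_β ψ̄_β dx, θ_β(x) = ψ_β(x)ψ̄_β(x)/π_β, K_β(x,y) = e^{βA(x,y)} ψ̄_β(y)/(ψ̄_β(x) λ_β). Let μ_{β,A} be the unique Borel probability measure on [0,1]^ℕ whose value on every cylinder A₀×⋯×A_k×[0,1]^ℕ equals ∫_{A₀×⋯×A_k} θ_β(x₀) ∏_{i=0}^{k−1} K_β(x_i, x_{i+1}) dx_k⋯dx₀. Then μ_{β,A} is the Gibbs state for βA: for every bounded continuous g : [0,1]^ℕ → ℝ depending on finitely many coordinates, ∫ L_{Ā}(g) dμ_{β,A} = ∫ g dμ_{β,A}, where Ā(x) = βA(x₀,x₁) + log ψ_β(x₀) − log ψ_β(x₁) − log λ_β and L_{Ā} g(x) = ∫₀¹ e^{Ā(ax)} g(ax) da. -/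

import Mathlib

open MeasureTheory Filter Topology
open Fin.NatCast

noncomputable section

/-- The Bernoulli space `[0,1]^ℕ`, realized inside `ℕ → ℝ`. -/
abbrev Bi : Type := ℕ → ℝ

/-- Lebesgue measure on `[0,1]` (the a priori measure). -/
def leb01 : Measure ℝ := volume.restrict (Set.Icc 0 1)

/-- Prepending a symbol: `consR a x = ax = (a, x₀, x₁, …)`. -/
def consR (a : ℝ) (x : Bi) : Bi := fun n =>
  match n with
  | 0 => a
  | k + 1 => x k

/-- The Ruelle operator on `[0,1]^ℕ` with a priori measure Lebesgue on `[0,1]`. -/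
def RuelleI (B : Bi → ℝ) (g : Bi → ℝ) : Bi → ℝ :=
  fun x => ∫ a, Real.exp (B (consR a x)) * g (consR a x) ∂leb01

/-- The density `θ_β(x) = ψ_β(x) ψ̄_β(x) / π_β` with `π_β = ∫ ψ_β ψ̄_β`. -/
def thetaB (ψ ψb : ℝ → ℝ) : ℝ → ℝ :=
  fun x => ψ x * ψb x / ∫ t, ψ t * ψb t ∂leb01

/-- The transition kernel `K_β(x,y) = e^{βA(x,y)} ψ̄_β(y)/(ψ̄_β(x) λ_β)`. -/
def Kker (A : ℝ → ℝ → ℝ) (β lam : ℝ) (ψb : ℝ → ℝ) : ℝ → ℝ → ℝ :=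
  fun x y => Real.exp (β * A x y) * ψb y / (ψb x * lam)

/-- The normalized potential `Ā(x) = βA(x₀,x₁) + log ψ_β(x₀) − log ψ_β(x₁) − log λ_β`. -/
def AbarI (A : ℝ → ℝ → ℝ) (β lam : ℝ) (ψ : ℝ → ℝ) : Bi → ℝ :=
  fun x => β * A (x 0) (x 1) + Real.log (ψ (x 0)) - Real.log (ψ (x 1)) - Real.log lam

/-! The normalized potential satisfies the detailed-balance relation
`e^{Ā(a x)} θ(x₀) = θ(a) K(a, x₀)`, since the factors `ψ(x₀)` and `ψ̄(a)` cancel. Hence, for `g`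
depending on `x₀, …, x_k`, the integrand of `∫ L_Ā g dμ`, written with the cylinder density of `μ`
in `k + 1` variables and the new variable `a`, is exactly `g(a x)` times the cylinder density in
the `k + 2` variables `(a, x₀, …, x_k)`; by Fubini this integrates to `∫ g dμ`. All densities are
continuous on the unit cubes carrying the product measures, which supplies the integrability. -/

open Set Function

section CylinderDensity

variable {X : Type*}

structure IsCylinderDensity [MeasurableSpace X] (μ : Measure (ℕ → X)) (ν : Measure X)
    {n : ℕ} (ρ : (Fin n → X) → ℝ) : Prop where
  integrable : Integrable ρ (Measure.pi fun _ => ν)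
  nonneg : 0 ≤ᵐ[Measure.pi fun _ => ν] ρ
  measure_cylinder : ∀ S : Fin n → Set X, (∀ i, MeasurableSet (S i)) →
    μ {x | ∀ i : Fin n, x i ∈ S i} =
      ENNReal.ofReal (∫ y in univ.pi S, ρ y ∂Measure.pi fun _ => ν)

def extendByZero [Zero X] {n : ℕ} (z : Fin n → X) : ℕ → X :=
  fun j => if h : j < n then z ⟨j, h⟩ else 0

theorem extendByZero_val [Zero X] {n : ℕ} (z : Fin n → X) (i : Fin n) :
    extendByZero z i = z i := by
  simp [extendByZero]

theorem DependsOn.eq_extendByZero [Zero X] {β : Type*} {f : (ℕ → X) → β} {n : ℕ}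
    (hf : DependsOn f (Iio n)) (x : ℕ → X) :
    f x = f (extendByZero fun i : Fin n => x i) :=
  hf fun j hj => (extendByZero_val (fun i : Fin n => x i) ⟨j, hj⟩).symm

variable [MeasurableSpace X]

theorem measurable_restrictFin (n : ℕ) : Measurable fun (x : ℕ → X) (i : Fin n) => x i :=
  measurable_pi_lambda _ fun _ => measurable_pi_apply _

namespace IsCylinderDensity

variable {μ : Measure (ℕ → X)} [IsFiniteMeasure μ] {ν : Measure X} {n : ℕ}
  {ρ : (Fin n → X) → ℝ}

theorem map_eq_withDensity (h : IsCylinderDensity μ ν ρ) :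
    μ.map (fun x (i : Fin n) => x i) =
      (Measure.pi fun _ => ν).withDensity fun y => ENNReal.ofReal (ρ y) := by
  have := isFiniteMeasure_withDensity_ofReal h.integrable.hasFiniteIntegral
  have hbox : ∀ S : Fin n → Set X, (∀ i, MeasurableSet (S i)) →
      μ.map (fun x (i : Fin n) => x i) (univ.pi S) =
        (Measure.pi fun _ => ν).withDensity (fun y => ENNReal.ofReal (ρ y)) (univ.pi S) := by
    intro S hS
    rw [Measure.map_apply (measurable_restrictFin n) (.univ_pi hS),
      withDensity_apply _ (.univ_pi hS), ← ofReal_integral_eq_lintegral_ofReal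
        h.integrable.integrableOn (ae_restrict_of_ae h.nonneg), ← h.measure_cylinder S hS]
    congr 1
    ext x
    simp
  refine ext_of_generate_finite _ generateFrom_pi.symm isPiSystem_pi ?_ ?_
  · rintro _ ⟨S, hS, rfl⟩
    exact hbox S fun i => hS i (mem_univ i)
  · simpa using hbox (fun _ => univ) fun _ => .univ

theorem integral_comp (h : IsCylinderDensity μ ν ρ) {F : (Fin n → X) → ℝ}
    (hF : AEStronglyMeasurable F (Measure.pi fun _ => ν)) :
    ∫ x, F (fun i => x i) ∂μ = ∫ y, ρ y * F y ∂Measure.pi fun _ => ν := by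
  have hF' : AEStronglyMeasurable F (μ.map fun x (i : Fin n) => x i) := by
    rw [h.map_eq_withDensity]
    exact hF.mono_ac (withDensity_absolutelyContinuous _ _)
  rw [← integral_map (measurable_restrictFin n).aemeasurable hF', h.map_eq_withDensity,
    integral_withDensity_eq_integral_toReal_smul₀ h.integrable.aemeasurable.ennreal_ofReal
      (ae_of_all _ fun _ => ENNReal.ofReal_lt_top)]
  refine integral_congr_ae (h.nonneg.mono fun y hy => ?_)
  simp [ENNReal.toReal_ofReal hy]

theorem integral_eq_of_dependsOn [Zero X] (h : IsCylinderDensity μ ν ρ) {f : (ℕ → X) → ℝ}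
    (hf : DependsOn f (Iio n))
    (hfm : AEStronglyMeasurable (fun y : Fin n → X => f (extendByZero y))
      (Measure.pi fun _ => ν)) :
    ∫ x, f x ∂μ = ∫ y, ρ y * f (extendByZero y) ∂Measure.pi fun _ => ν :=
  (integral_congr_ae (ae_of_all _ hf.eq_extendByZero)).trans (h.integral_comp hfm)

end IsCylinderDensity

end CylinderDensity

section FinCons

variable {X : Type*} [MeasurableSpace X]

theorem measurePreserving_finCons (ν : Measure X) [SigmaFinite ν] (n : ℕ) :
    MeasurePreserving (fun p : (Fin n → X) × X => (Fin.cons p.2 p.1 : Fin (n + 1) → X))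
      ((Measure.pi fun _ => ν).prod ν) (Measure.pi fun _ => ν) := by
  have h := (measurePreserving_piFinSuccAbove (fun _ : Fin (n + 1) => ν) 0).symm.comp
    (Measure.measurePreserving_swap (μ := Measure.pi fun _ : Fin n => ν) (ν := ν))
  convert h using 1
  ext p : 1
  simp [MeasurableEquiv.piFinSuccAbove_symm_apply, Fin.consEquiv]

variable {ν : Measure X} [SigmaFinite ν] {n : ℕ}

theorem MeasureTheory.AEStronglyMeasurable.integral_finCons {f : (Fin (n + 1) → X) → ℝ}
    (hf : AEStronglyMeasurable f (Measure.pi fun _ => ν)) :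
    AEStronglyMeasurable (fun z : Fin n → X => ∫ a, f (Fin.cons a z) ∂ν)
      (Measure.pi fun _ => ν) :=
  (hf.comp_measurePreserving (measurePreserving_finCons ν n)).integral_prod_right'

theorem integral_eq_integral_integral_finCons {f : (Fin (n + 1) → X) → ℝ}
    (hf : Integrable f (Measure.pi fun _ => ν)) :
    ∫ w, f w ∂Measure.pi (fun _ => ν) =
      ∫ z, ∫ a, f (Fin.cons a z) ∂ν ∂Measure.pi fun _ => ν := by
  have hcons := measurePreserving_finCons ν n
  rw [← hcons.map_eq, integral_map hcons.measurable.aemeasurable (hcons.map_eq ▸ hf.1)]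
  exact integral_prod _ (hcons.integrable_comp_of_integrable hf)

end FinCons

section UnitCube

instance : IsProbabilityMeasure leb01 :=
  ⟨by rw [leb01, Measure.restrict_apply_univ, Real.volume_Icc]; norm_num⟩

variable {n : ℕ}

theorem pi_leb01 : Measure.pi (fun _ : Fin n => leb01) =
    volume.restrict (univ.pi fun _ => Icc (0 : ℝ) 1) := by
  rw [volume_pi, Measure.restrict_pi_pi]
  rfl

theorem ae_pi_leb01_mem :
    ∀ᵐ y ∂Measure.pi (fun _ : Fin n => leb01), y ∈ univ.pi fun _ => Icc (0 : ℝ) 1 := by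
  rw [pi_leb01]
  exact ae_restrict_mem (.univ_pi fun _ => measurableSet_Icc)

theorem ae_leb01_mem : ∀ᵐ a ∂leb01, a ∈ Icc (0 : ℝ) 1 :=
  ae_restrict_mem measurableSet_Icc

theorem ContinuousOn.integrable_pi_leb01 {f : (Fin n → ℝ) → ℝ}
    (hf : ContinuousOn f (univ.pi fun _ => Icc 0 1)) :
    Integrable f (Measure.pi fun _ => leb01) := by
  rw [pi_leb01]
  exact hf.integrableOn_compact (isCompact_univ_pi fun _ => isCompact_Icc)

end UnitCube

section Ruelle

theorem consR_extendByZero {n : ℕ} (a : ℝ) (z : Fin n → ℝ) :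
    consR a (extendByZero z) = extendByZero (Fin.cons a z : Fin (n + 1) → ℝ) := by
  funext j
  cases j with
  | zero => rfl
  | succ j =>
    by_cases h : j < n
    · simp [consR, extendByZero, h, ← Fin.succ_mk]
    · simp [consR, extendByZero, h]

theorem continuous_extendByZero (n : ℕ) : Continuous (extendByZero : (Fin n → ℝ) → Bi) := by
  refine continuous_pi fun j => ?_
  by_cases h : j < n
  · simpa [extendByZero, h] using continuous_apply _
  · simpa [extendByZero, h] using continuous_const

theorem DependsOn.ruelleI {B g : Bi → ℝ} {n : ℕ} (hB : DependsOn B (Iio (n + 1)))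
    (hg : DependsOn g (Iio (n + 1))) : DependsOn (RuelleI B g) (Iio n) := by
  intro x y hxy
  have hcons : ∀ a, ∀ i ∈ Iio (n + 1), consR a x i = consR a y i := by
    rintro a (_ | i) hi
    · rfl
    · exact hxy i (Nat.succ_lt_succ_iff.1 hi)
  simp only [RuelleI, hB (hcons _), hg (hcons _)]

theorem integral_ruelleI_eq_integral {μ : Measure Bi} [IsFiniteMeasure μ] {n : ℕ}
    {B g : Bi → ℝ} {ρ : (Fin n → ℝ) → ℝ} {ρ' : (Fin (n + 1) → ℝ) → ℝ}
    (hρ : IsCylinderDensity μ leb01 ρ) (hρ' : IsCylinderDensity μ leb01 ρ')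
    (hB : DependsOn B (Iio (n + 1))) (hg : DependsOn g (Iio (n + 1)))
    (hBm : AEStronglyMeasurable (fun w : Fin (n + 1) → ℝ => B (extendByZero w))
      (Measure.pi fun _ => leb01))
    (hgm : AEStronglyMeasurable (fun w : Fin (n + 1) → ℝ => g (extendByZero w))
      (Measure.pi fun _ => leb01))
    (hgb : ∃ C, ∀ x, |g x| ≤ C)
    (hbal : ∀ᵐ z ∂Measure.pi fun _ => leb01, ∀ᵐ a ∂leb01,
      Real.exp (B (consR a (extendByZero z))) * ρ z = ρ' (Fin.cons a z)) :
    ∫ x, RuelleI B g x ∂μ = ∫ x, g x ∂μ := by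
  obtain ⟨C, hC⟩ := hgb
  have hL : ∀ z : Fin n → ℝ, RuelleI B g (extendByZero z) =
      ∫ a, Real.exp (B (extendByZero (Fin.cons a z : Fin (n + 1) → ℝ))) *
        g (extendByZero (Fin.cons a z : Fin (n + 1) → ℝ)) ∂leb01 := fun z => by
    simp only [RuelleI, consR_extendByZero]
  have hLm : AEStronglyMeasurable (fun z : Fin n → ℝ => RuelleI B g (extendByZero z))
      (Measure.pi fun _ => leb01) := by
    simp only [hL]
    exact ((Real.continuous_exp.comp_aestronglyMeasurable hBm).mul hgm).integral_finCons
  have hint : Integrable (fun w => ρ' w * g (extendByZero w)) (Measure.pi fun _ => leb01) :=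
    hρ'.integrable.mul_bdd hgm (ae_of_all _ fun _ => hC _)
  calc ∫ x, RuelleI B g x ∂μ
      = ∫ z, ρ z * RuelleI B g (extendByZero z) ∂Measure.pi fun _ => leb01 :=
        hρ.integral_eq_of_dependsOn (hB.ruelleI hg) hLm
    _ = ∫ z, ∫ a, ρ' (Fin.cons a z) * g (extendByZero (Fin.cons a z : Fin (n + 1) → ℝ))
          ∂leb01 ∂Measure.pi fun _ => leb01 := by
        refine integral_congr_ae ?_
        filter_upwards [hbal] with z hz
        rw [hL, ← integral_const_mul]
        refine integral_congr_ae ?_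
        filter_upwards [hz] with a ha
        rw [← ha, consR_extendByZero]
        ring
    _ = ∫ w, ρ' w * g (extendByZero w) ∂Measure.pi fun _ => leb01 :=
        (integral_eq_integral_integral_finCons hint).symm
    _ = ∫ x, g x ∂μ := (hρ'.integral_eq_of_dependsOn hg hgm).symm

end Ruelle

section MarkovDensity

variable {X : Type*}

theorem finCons_natCast_succ {m : ℕ} (a : X) (z : Fin (m + 1) → X) {j : ℕ} (hj : j < m + 1) :
    (Fin.cons a z : Fin (m + 2) → X) ((j + 1 : ℕ) : Fin (m + 2)) = z j := by
  have : ((j + 1 : ℕ) : Fin (m + 2)) = Fin.succ (j : Fin (m + 1)) := by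
    ext
    rw [Fin.val_natCast, Fin.val_succ, Fin.val_natCast, Nat.mod_eq_of_lt hj,
      Nat.mod_eq_of_lt (Nat.succ_lt_succ hj)]
  rw [this, Fin.cons_succ]

variable (θ : X → ℝ) (K : X → X → ℝ)

def markovDensity (m : ℕ) (y : Fin (m + 1) → X) : ℝ :=
  θ (y 0) * ∏ i ∈ Finset.range m, K (y i) (y (i + 1 : ℕ))

theorem markovDensity_cons (m : ℕ) (a : X) (z : Fin (m + 1) → X) :
    markovDensity θ K (m + 1) (Fin.cons a z) =
      θ a * K a (z 0) * ∏ i ∈ Finset.range m, K (z i) (z (i + 1 : ℕ)) := by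
  have htail : ∏ i ∈ Finset.range m, K ((Fin.cons a z : Fin (m + 2) → X) (i + 1 : ℕ))
      ((Fin.cons a z : Fin (m + 2) → X) (i + 1 + 1 : ℕ)) =
      ∏ i ∈ Finset.range m, K (z i) (z (i + 1 : ℕ)) := by
    refine Finset.prod_congr rfl fun i hi => ?_
    have hi : i < m := Finset.mem_range.1 hi
    rw [finCons_natCast_succ a z (by omega), finCons_natCast_succ a z (by omega)]
  rw [markovDensity, Finset.prod_range_succ', htail, finCons_natCast_succ a z m.succ_pos]
  simp only [Nat.cast_zero, Fin.cons_zero]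
  ring

variable {θ K} {s : Set X}

theorem continuousOn_markovDensity [TopologicalSpace X] (hθ : ContinuousOn θ s)
    (hK : ContinuousOn (uncurry K) (s ×ˢ s)) (m : ℕ) :
    ContinuousOn (markovDensity θ K m) (univ.pi fun _ => s) :=
  (hθ.comp (continuous_apply 0).continuousOn fun _ hy => mem_univ_pi.1 hy 0).mul <|
    continuousOn_finsetProd _ fun i _ =>
      hK.comp (f := fun y : Fin (m + 1) → X => (y i, y (i + 1 : ℕ)))
        ((continuous_apply _).prodMk (continuous_apply _)).continuousOn
        fun _ hy => ⟨mem_univ_pi.1 hy _, mem_univ_pi.1 hy _⟩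

theorem markovDensity_nonneg (hθ : ∀ x ∈ s, 0 ≤ θ x) (hK : ∀ x ∈ s, ∀ y ∈ s, 0 ≤ K x y)
    {m : ℕ} {y : Fin (m + 1) → X} (hy : y ∈ univ.pi fun _ => s) :
    0 ≤ markovDensity θ K m y :=
  mul_nonneg (hθ _ (mem_univ_pi.1 hy 0))
    (Finset.prod_nonneg fun _ _ => hK _ (mem_univ_pi.1 hy _) _ (mem_univ_pi.1 hy _))

theorem isCylinderDensity_markovDensity {μ : Measure Bi} {θ : ℝ → ℝ} {K : ℝ → ℝ → ℝ}
    {m : ℕ}    (hθc : ContinuousOn θ (Icc 0 1)) (hθ : ∀ x ∈ Icc (0 : ℝ) 1, 0 ≤ θ x)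
    (hKc : ContinuousOn (uncurry K) (Icc 0 1 ×ˢ Icc 0 1))
    (hK : ∀ x ∈ Icc (0 : ℝ) 1, ∀ y ∈ Icc (0 : ℝ) 1, 0 ≤ K x y)
    (hcyl : ∀ S : Fin (m + 1) → Set ℝ, (∀ i, MeasurableSet (S i)) →
      μ {x | ∀ i : Fin (m + 1), x i ∈ S i} =
        ENNReal.ofReal (∫ y in univ.pi S, markovDensity θ K m y
          ∂Measure.pi fun _ => leb01)) :
    IsCylinderDensity μ leb01 (markovDensity θ K m) :=
  ⟨(continuousOn_markovDensity hθc hKc m).integrable_pi_leb01,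
    ae_pi_leb01_mem.mono fun _ hy => markovDensity_nonneg hθ hK hy, hcyl⟩

end MarkovDensity

theorem continuousOn_of_dist_le_mul_rpow {X Y : Type*} [PseudoMetricSpace X]
    [PseudoMetricSpace Y] {f : X → Y} {s : Set X} {C α : ℝ} (hα : 0 < α)
    (hf : ∀ x ∈ s, ∀ y ∈ s, dist (f x) (f y) ≤ C * dist x y ^ α) : ContinuousOn f s := by
  intro x hx
  rw [ContinuousWithinAt, tendsto_iff_dist_tendsto_zero]
  have hbound : Tendsto (fun y => C * dist y x ^ α) (𝓝[s] x) (𝓝 0) := by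
    have h : Continuous fun y => C * dist y x ^ α :=
      continuous_const.mul ((continuous_id.dist continuous_const).rpow_const
        fun _ => Or.inr hα.le)
    simpa [Real.zero_rpow hα.ne'] using (h.tendsto x).mono_left nhdsWithin_le_nhds
  exact squeeze_zero' (Eventually.of_forall fun _ => dist_nonneg)
    (eventually_nhdsWithin_of_forall fun y hy => hf y hy x hx) hbound

section GibbsPotential

variable {A : ℝ → ℝ → ℝ} {β lam : ℝ} {ψ ψb : ℝ → ℝ}

theorem exp_AbarI_mul_thetaB (hlam : 0 < lam) {x : Bi} (hψ₀ : 0 < ψ (x 0))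
    (hψ₁ : 0 < ψ (x 1)) (hψb₀ : ψb (x 0) ≠ 0) :
    Real.exp (AbarI A β lam ψ x) * thetaB ψ ψb (x 1) =
      thetaB ψ ψb (x 0) * Kker A β lam ψb (x 0) (x 1) := by
  simp only [AbarI, thetaB, Kker, Real.exp_sub, Real.exp_add, Real.exp_log hψ₀,
    Real.exp_log hψ₁, Real.exp_log hlam]
  field_simp

theorem AbarI_dependsOn : DependsOn (AbarI A β lam ψ) (Iio 2) := fun x y h => by
  simp only [AbarI, h 0 (by norm_num), h 1 (by norm_num)]

theorem continuousOn_AbarI (hAc : ContinuousOn (uncurry A) (Icc 0 1 ×ˢ Icc 0 1))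
    (hψc : ContinuousOn ψ (Icc 0 1)) (hψ : ∀ x ∈ Icc (0 : ℝ) 1, 0 < ψ x) :
    ContinuousOn (AbarI A β lam ψ) {x | x 0 ∈ Icc (0 : ℝ) 1 ∧ x 1 ∈ Icc (0 : ℝ) 1} := by
  have hlogψ : ∀ i,
      ContinuousOn (fun x : Bi => Real.log (ψ (x i))) {x | x i ∈ Icc (0 : ℝ) 1} :=
    fun i => (hψc.comp (f := fun x : Bi => x i) (continuous_apply i).continuousOn
      fun _ hx => hx).log fun _ hx => (hψ _ hx).ne'
  refine (((continuousOn_const.mul ?_).add ((hlogψ 0).mono fun _ hx => hx.1)).sub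
    ((hlogψ 1).mono fun _ hx => hx.2)).sub continuousOn_const
  exact hAc.comp (f := fun x : Bi => (x 0, x 1))
    ((continuous_apply 0).prodMk (continuous_apply 1)).continuousOn fun _ hx => hx

theorem thetaB_nonneg (hψ : ∀ x ∈ Icc (0 : ℝ) 1, 0 < ψ x)
    (hψb : ∀ x ∈ Icc (0 : ℝ) 1, 0 < ψb x) {x : ℝ} (hx : x ∈ Icc (0 : ℝ) 1) : 0 ≤ thetaB ψ ψb x :=
  div_nonneg (mul_pos (hψ x hx) (hψb x hx)).le <|
    setIntegral_nonneg measurableSet_Icc fun t ht => (mul_pos (hψ t ht) (hψb t ht)).le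

theorem Kker_nonneg (hlam : 0 < lam) (hψb : ∀ x ∈ Icc (0 : ℝ) 1, 0 < ψb x)
    {x : ℝ} (hx : x ∈ Icc (0 : ℝ) 1) {y : ℝ} (hy : y ∈ Icc (0 : ℝ) 1) :
    0 ≤ Kker A β lam ψb x y :=
  div_nonneg (mul_pos (Real.exp_pos _) (hψb y hy)).le (mul_pos (hψb x hx) hlam).le

theorem continuousOn_Kker (hAc : ContinuousOn (uncurry A) (Icc 0 1 ×ˢ Icc 0 1))
    (hlam : 0 < lam) (hψbc : ContinuousOn ψb (Icc 0 1))
    (hψb : ∀ x ∈ Icc (0 : ℝ) 1, 0 < ψb x) :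
    ContinuousOn (uncurry (Kker A β lam ψb)) (Icc 0 1 ×ˢ Icc 0 1) := by
  have hψb₁ : ContinuousOn (fun p : ℝ × ℝ => ψb p.1) (Icc 0 1 ×ˢ Icc 0 1) :=
    hψbc.comp continuousOn_fst fun _ hp => hp.1
  have hψb₂ : ContinuousOn (fun p : ℝ × ℝ => ψb p.2) (Icc 0 1 ×ˢ Icc 0 1) :=
    hψbc.comp continuousOn_snd fun _ hp => hp.2
  exact ((Real.continuous_exp.comp_continuousOn (continuousOn_const.mul hAc)).mul hψb₂).div
    (hψb₁.mul continuousOn_const) fun p hp => (mul_pos (hψb _ hp.1) hlam).ne'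

theorem markovDensity_balance (hlam : 0 < lam) (hψ : ∀ x ∈ Icc (0 : ℝ) 1, 0 < ψ x)
    (hψb : ∀ x ∈ Icc (0 : ℝ) 1, 0 < ψb x) {m : ℕ} {z : Fin (m + 1) → ℝ}
    (hz : z ∈ univ.pi fun _ => Icc (0 : ℝ) 1) {a : ℝ} (ha : a ∈ Icc (0 : ℝ) 1) :
    Real.exp (AbarI A β lam ψ (consR a (extendByZero z))) *
        markovDensity (thetaB ψ ψb) (Kker A β lam ψb) m z =
      markovDensity (thetaB ψ ψb) (Kker A β lam ψb) (m + 1) (Fin.cons a z) := by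
  have h₀ : consR a (extendByZero z) 0 = a := rfl
  have h₁ : consR a (extendByZero z) 1 = z 0 := extendByZero_val z 0
  have hbal := exp_AbarI_mul_thetaB (A := A) (β := β) (ψb := ψb) (x := consR a (extendByZero z))
    hlam (hψ a ha) (h₁ ▸ hψ _ (mem_univ_pi.1 hz 0)) (hψb a ha).ne'
  rw [h₀, h₁] at hbal
  rw [markovDensity_cons, markovDensity, ← mul_assoc, hbal]

end GibbsPotential

theorem markov_measure_is_gibbs_general
    (A : ℝ → ℝ → ℝ) (α HA : ℝ) (hα0 : 0 < α)
    (hA : ∀ x ∈ Set.Icc (0:ℝ) 1, ∀ y ∈ Set.Icc (0:ℝ) 1, ∀ x' ∈ Set.Icc (0:ℝ) 1,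
      ∀ y' ∈ Set.Icc (0:ℝ) 1, |A x y - A x' y'| ≤ HA * (max |x - x'| |y - y'|) ^ α)
    (β : ℝ)
    (lam : ℝ) (hlam : 0 < lam)
    (ψ ψb : ℝ → ℝ)
    (hψc : ContinuousOn ψ (Set.Icc 0 1)) (hψbc : ContinuousOn ψb (Set.Icc 0 1))
    (hψpos : ∀ x ∈ Set.Icc (0:ℝ) 1, 0 < ψ x) (hψbpos : ∀ x ∈ Set.Icc (0:ℝ) 1, 0 < ψb x)
    (μ : Measure Bi) (hμ : IsProbabilityMeasure μ)
    (hcyl : ∀ (k : ℕ) (S : Fin (k + 1) → Set ℝ), (∀ i, MeasurableSet (S i)) →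
      μ {x : Bi | ∀ i : Fin (k + 1), x (i : ℕ) ∈ S i} =
        ENNReal.ofReal (∫ y in Set.univ.pi S,
          thetaB ψ ψb (y 0) * ∏ i ∈ Finset.range k,
            Kker A β lam ψb (y (i : Fin (k + 1))) (y ((i + 1 : ℕ) : Fin (k + 1)))
          ∂(Measure.pi fun _ : Fin (k + 1) => leb01))) :
    ∀ g : Bi → ℝ, Continuous g → (∃ C, ∀ x, |g x| ≤ C) →
      (∃ k : ℕ, ∀ x y : Bi, (∀ i ≤ k, x i = y i) → g x = g y) →
      ∫ x, RuelleI (AbarI A β lam ψ) g x ∂μ = ∫ x, g x ∂μ := by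
  rintro g hgc hgb ⟨k, hk⟩
  have hAc : ContinuousOn (uncurry A) (Icc 0 1 ×ˢ Icc 0 1) :=
    continuousOn_of_dist_le_mul_rpow hα0 fun p hp q hq => by
      simpa only [Prod.dist_eq, Real.dist_eq, uncurry] using hA _ hp.1 _ hp.2 _ hq.1 _ hq.2
  have hρ : ∀ m,
      IsCylinderDensity μ leb01 (markovDensity (thetaB ψ ψb) (Kker A β lam ψb) m) :=
    fun m => isCylinderDensity_markovDensity ((hψc.mul hψbc).div_const _)
      (fun _ => thetaB_nonneg hψpos hψbpos) (continuousOn_Kker hAc hlam hψbc hψbpos)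
      (fun _ hx _ hy => Kker_nonneg hlam hψbpos hx hy) (hcyl m)
  refine integral_ruelleI_eq_integral (n := k + 1) (hρ k) (hρ (k + 1))
    (AbarI_dependsOn.mono (Iio_subset_Iio (by omega)))
    (fun x y h => hk x y fun i hi => h i (mem_Iio.2 (by omega))) ?_
    (hgc.comp (continuous_extendByZero _)).aestronglyMeasurable hgb ?_
  · refine ((continuousOn_AbarI hAc hψc hψpos).comp (continuous_extendByZero _).continuousOn
      fun w hw => ?_).integrable_pi_leb01.aestronglyMeasurable
    have h₀ : extendByZero w 0 = w 0 := extendByZero_val w 0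
    have h₁ : extendByZero w 1 = w 1 := extendByZero_val w 1
    exact ⟨h₀ ▸ mem_univ_pi.1 hw 0, h₁ ▸ mem_univ_pi.1 hw 1⟩
  · filter_upwards [ae_pi_leb01_mem] with z hz
    filter_upwards [ae_leb01_mem] with a ha
    exact markovDensity_balance hlam hψpos hψbpos hz ha

/-- the stationary Markov measure `μ_{β,A}` given by the density `θ_β`
and the kernel `K_β` is the Gibbs state for `βA`: it is fixed by the dual of the
Ruelle operator of the normalized potential `Ā`. -/
theorem markov_measure_is_gibbs
    (A : ℝ → ℝ → ℝ) (α HA : ℝ) (hα0 : 0 < α) (hα1 : α ≤ 1)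
    (hA : ∀ x ∈ Set.Icc (0:ℝ) 1, ∀ y ∈ Set.Icc (0:ℝ) 1, ∀ x' ∈ Set.Icc (0:ℝ) 1,
      ∀ y' ∈ Set.Icc (0:ℝ) 1, |A x y - A x' y'| ≤ HA * (max |x - x'| |y - y'|) ^ α)
    (β : ℝ) (hβ : 0 < β)
    (lam : ℝ) (hlam : 0 < lam)
    (ψ ψb : ℝ → ℝ)
    (hψc : ContinuousOn ψ (Set.Icc 0 1)) (hψbc : ContinuousOn ψb (Set.Icc 0 1))
    (hψpos : ∀ x ∈ Set.Icc (0:ℝ) 1, 0 < ψ x) (hψbpos : ∀ x ∈ Set.Icc (0:ℝ) 1, 0 < ψb x)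
    (heig : ∀ y ∈ Set.Icc (0:ℝ) 1, ∫ x, Real.exp (β * A x y) * ψ x ∂leb01 = lam * ψ y)
    (heigb : ∀ x ∈ Set.Icc (0:ℝ) 1, ∫ y, Real.exp (β * A x y) * ψb y ∂leb01 = lam * ψb x)
    (μ : Measure Bi) (hμ : IsProbabilityMeasure μ)
    (hcyl : ∀ (k : ℕ) (S : Fin (k + 1) → Set ℝ), (∀ i, MeasurableSet (S i)) →
      μ {x : Bi | ∀ i : Fin (k + 1), x (i : ℕ) ∈ S i} =
        ENNReal.ofReal (∫ y in Set.univ.pi S,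
          thetaB ψ ψb (y 0) * ∏ i ∈ Finset.range k,
            Kker A β lam ψb (y (i : Fin (k + 1))) (y ((i + 1 : ℕ) : Fin (k + 1)))
          ∂(Measure.pi fun _ : Fin (k + 1) => leb01))) :
    ∀ g : Bi → ℝ, Continuous g → (∃ C, ∀ x, |g x| ≤ C) →
      (∃ k : ℕ, ∀ x y : Bi, (∀ i ≤ k, x i = y i) → g x = g y) →
      ∫ x, RuelleI (AbarI A β lam ψ) g x ∂μ = ∫ x, g x ∂μ :=
  markov_measure_is_gibbs_general A α HA hα0 hA β lam hlam ψ ψb hψc hψbc hψpos hψbpos μ hμ hcyl
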